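/- arXiv:1905.00327 — 2 statements merged into one kernel-verified Lean document; each statement's English description precedes it below -/
import Mathlib

section
/- For all integers m ≥ 1 and n ≥ 1: det( binomial(i+j+m, i-j+m) )_{i,j=0}^{n-1} = ∏_{1 ≤ i ≤ j ≤ n-1} (2m+i+j)/(i+j). -/
/-!
The matrix has entries `A i j = C(m+i+j, 2j)`. Scaling row `i` by `C(2m+i, m)` and column `j`
by `C(2j, j) / C(m+j, j)` turns it into `L * U`, where `L i k = C(i, k) C(2m+i+k, m+k)` is lower
triangular and `U k j = C(m, j-k)` is upper unitriangular. The entries of `L * U` are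
`∑ k, C(m, j-k) C(i, k) C(2m+i+k, m+k) = C(m+i+j, j) C(2m+i, m+j)`: both sides satisfy the same
first-order recurrence in `j`, which Zeilberger's algorithm finds for the sum together with a
certificate making the sum telescope. The determinant is then the product of the diagonal of `L`
corrected by the scalings, and its `j`-th factor `C(2m+2j, j) / C(2j, j)` is
`∏ i ∈ [1, j], (2m+i+j) / (i+j)`.
-/

open Finset Matrix
open scoped Nat

theorem cast_choose_succ_right_eq {R : Type*} [CommRing R] (n k : ℕ) :
    (n.choose (k + 1) : R) * (k + 1) = n.choose k * (n - k) := by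
  rcases le_or_gt k n with hkn | hnk
  · have h := congrArg (Nat.cast (R := R)) (Nat.choose_succ_right_eq n k)
    push_cast [Nat.cast_sub hkn] at h
    exact h
  · simp [Nat.choose_eq_zero_of_lt hnk, Nat.choose_eq_zero_of_lt (hnk.trans k.lt_succ_self)]

def lowerFactor (m i k : ℕ) : ℕ := i.choose k * (2 * m + i + k).choose (m + k)

def upperFactor (m k j : ℕ) : ℕ := if k ≤ j then m.choose (j - k) else 0

theorem upperFactor_add (m k d : ℕ) : upperFactor m k (k + d) = m.choose d := by
  simp [upperFactor]

theorem upperFactor_of_lt {m k j : ℕ} (h : j < k) : upperFactor m k j = 0 := by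
  simp [upperFactor, h]

def luTerm (m i j k : ℕ) : ℕ := lowerFactor m i k * upperFactor m k j

theorem luTerm_of_lt {m i j k : ℕ} (h : j < k) : luTerm m i j k = 0 := by
  simp [luTerm, upperFactor_of_lt h]

theorem luTerm_certificate (m i j k : ℕ) :
    ((j + 1) * (m + j + 1) - k * (k + m) : ℤ) * luTerm m i (j + 1) k
        + (k + 1) * (k + m + 1) * luTerm m i (j + 1) (k + 1)
      = (m + i + j + 1) * (m + i - j) * luTerm m i j k := by
  rcases le_or_gt k j with hkj | hjk
  · obtain ⟨d, rfl⟩ := Nat.exists_eq_add_of_le hkj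
    have e1 := cast_choose_succ_right_eq (R := ℤ) m d
    have e2 := cast_choose_succ_right_eq (R := ℤ) i k
    have e3 := congrArg (Nat.cast (R := ℤ)) (Nat.add_one_mul_choose_eq (2 * m + i + k) (m + k))
    have u1 : upperFactor m k (k + d + 1) = m.choose (d + 1) := upperFactor_add m k (d + 1)
    have u2 : upperFactor m (k + 1) (k + d + 1) = m.choose d := by
      rw [add_right_comm]; exact upperFactor_add m (k + 1) d
    simp only [luTerm, lowerFactor, upperFactor_add, u1, u2]
    push_cast at e3 ⊢
    linear_combination
      ((m + 2 * k + d + 1 : ℤ) * i.choose k * (2 * m + i + k).choose (m + k)) * e1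
        + ((m.choose d : ℤ) * (m + k + 1) * (2 * m + i + k + 1).choose (m + k + 1)) * e2
        - ((m.choose d : ℤ) * i.choose k * (i - k)) * e3
  · rw [luTerm_of_lt hjk, luTerm_of_lt (by omega : j + 1 < k + 1)]
    obtain rfl | hk := (Nat.succ_le_of_lt hjk).eq_or_lt
    · push_cast; ring
    · rw [luTerm_of_lt hk]; ring

theorem sum_luTerm_recurrence (m i j : ℕ) :
    ((j + 1) * (m + j + 1) : ℤ) * ∑ k ∈ range (j + 2), (luTerm m i (j + 1) k : ℤ)
      = (m + i + j + 1) * (m + i - j) * ∑ k ∈ range (j + 1), (luTerm m i j k : ℤ) := by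
  let G : ℕ → ℤ := fun k => k * (k + m) * luTerm m i (j + 1) k
  have step (k : ℕ) : ((j + 1) * (m + j + 1) : ℤ) * luTerm m i (j + 1) k
      = (m + i + j + 1) * (m + i - j) * luTerm m i j k + (G k - G (k + 1)) := by
    push_cast [G]
    linear_combination luTerm_certificate m i j k
  rw [mul_sum, sum_congr rfl fun k _ => step k, sum_add_distrib, sum_range_sub', ← mul_sum,
    sum_range_succ _ (j + 1), luTerm_of_lt j.lt_succ_self]
  simp [G, luTerm_of_lt (show j + 1 < j + 2 by omega)]

theorem sum_luTerm (m i j : ℕ) :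
    ∑ k ∈ range (j + 1), luTerm m i j k
      = (m + i + j).choose j * (2 * m + i).choose (m + j) := by
  induction j with
  | zero => simp [luTerm, lowerFactor, upperFactor]
  | succ j ih =>
    apply Nat.cast_injective (R := ℤ)
    apply mul_left_cancel₀ (show ((j + 1) * (m + j + 1) : ℤ) ≠ 0 by positivity)
    push_cast [sum_luTerm_recurrence, ← add_assoc]
    rw [← Nat.cast_sum, ih]
    have f1 := congrArg (Nat.cast (R := ℤ)) (Nat.add_one_mul_choose_eq (m + i + j) j)
    have f2 := cast_choose_succ_right_eq (R := ℤ) (2 * m + i) (m + j)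
    push_cast at f1 f2 ⊢
    linear_combination ((m + j + 1) * ((2 * m + i).choose (m + j + 1) : ℤ)) * f1
      - ((m + i + j + 1) * ((m + i + j).choose j : ℤ)) * f2

theorem prod_Icc_add_eq_choose_mul_factorial (c j : ℕ) :
    ∏ t ∈ Icc 1 j, (c + t) = (c + j).choose j * j ! := by
  induction j with
  | zero => simp
  | succ j ih =>
    rw [prod_Icc_succ_top (by omega), ih, Nat.factorial_succ, ← add_assoc]
    linear_combination (j !) * Nat.add_one_mul_choose_eq (c + j) j

theorem cast_choose_div_choose_eq_prod (m j : ℕ) :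
    ((2 * m + 2 * j).choose j : ℚ) / (2 * j).choose j
      = ∏ i ∈ Icc 1 j, ((2 * m + i + j : ℚ) / (i + j)) := by
  have num : ∏ i ∈ Icc 1 j, (2 * m + i + j : ℚ) = (2 * m + 2 * j).choose j * j ! := by
    rw [show 2 * m + 2 * j = 2 * m + j + j by ring]
    exact_mod_cast (prod_congr rfl fun i _ => by ring).trans
      (prod_Icc_add_eq_choose_mul_factorial (2 * m + j) j)
  have den : ∏ i ∈ Icc 1 j, (i + j : ℚ) = (2 * j).choose j * j ! := by
    rw [two_mul]
    exact_mod_cast (prod_congr rfl fun i _ => by ring).trans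
      (prod_Icc_add_eq_choose_mul_factorial j j)
  rw [prod_div_distrib, num, den, mul_div_mul_right _ _ (by positivity)]

theorem choose_mul_choose_mul_choose (m i j : ℕ) :
    (2 * m + i).choose m * (m + i + j).choose (2 * j) * (2 * j).choose j
      = (m + i + j).choose j * (2 * m + i).choose (m + j) * (m + j).choose j := by
  have h1 := Nat.choose_mul (n := m + i + j) (k := 2 * j) (s := j) (by omega)
  have h2 := Nat.choose_mul (n := 2 * m + i) (k := m + j) (s := m) (by omega)
  rw [show m + i + j - j = m + i by omega, show 2 * j - j = j by omega] at h1
  rw [show 2 * m + i - m = m + i by omega, show m + j - m = j by omega] at h2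
  rw [show (m + j).choose j = (m + j).choose m from Nat.choose_symm_add.symm]
  linear_combination (2 * m + i).choose m * h1 - (m + i + j).choose j * h2

def lowerFactorMatrix (m n : ℕ) : Matrix (Fin n) (Fin n) ℚ := of fun i k => lowerFactor m i k

def upperFactorMatrix (m n : ℕ) : Matrix (Fin n) (Fin n) ℚ := of fun k j => upperFactor m k j

theorem det_lowerFactorMatrix (m n : ℕ) :
    (lowerFactorMatrix m n).det = ∏ i : Fin n, ((2 * m + 2 * i).choose (m + i) : ℚ) := by
  rw [det_of_isLowerTriangular]
  · simp [lowerFactorMatrix, lowerFactor, two_mul, add_assoc]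
  · intro i k hik
    simp [lowerFactorMatrix, lowerFactor, Nat.choose_eq_zero_of_lt (show (i : ℕ) < k from hik)]

theorem det_upperFactorMatrix (m n : ℕ) : (upperFactorMatrix m n).det = 1 := by
  rw [det_of_isUpperTriangular]
  · simp [upperFactorMatrix, upperFactor]
  · intro k j hjk
    simp [upperFactorMatrix, upperFactor_of_lt (show (j : ℕ) < k from hjk)]

theorem lowerFactorMatrix_mul_upperFactorMatrix_apply (m n : ℕ) (i j : Fin n) :
    (lowerFactorMatrix m n * upperFactorMatrix m n) i j
      = (m + i + j).choose j * (2 * m + i).choose (m + j) := by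
  calc ∑ k : Fin n, (lowerFactor m i k : ℚ) * upperFactor m k j
      = ∑ k ∈ range n, (luTerm m i j k : ℚ) := by
        push_cast [luTerm]
        exact Fin.sum_univ_eq_sum_range (fun k => (lowerFactor m i k * upperFactor m k j : ℚ)) n
    _ = ∑ k ∈ range (j + 1), (luTerm m i j k : ℚ) :=
        eventually_constant_sum (fun k hk => by simp [luTerm_of_lt hk]) j.isLt
    _ = (m + i + j).choose j * (2 * m + i).choose (m + j) := by exact_mod_cast sum_luTerm m i j

theorem det_choose_two_mul (m n : ℕ) :
    (of fun i j : Fin n => ((m + i + j).choose (2 * j) : ℚ)).det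
      = ∏ j : Fin n, ((2 * m + 2 * j).choose j : ℚ) / (2 * (j : ℕ)).choose j := by
  set A := of fun i j : Fin n => ((m + i + j).choose (2 * j) : ℚ)
  have hLU : diagonal (fun i : Fin n => ((2 * m + i).choose m : ℚ)) * A
        * diagonal (fun j : Fin n => ((2 * (j : ℕ)).choose j : ℚ))
      = lowerFactorMatrix m n * upperFactorMatrix m n
        * diagonal (fun j : Fin n => ((m + j).choose j : ℚ)) := by
    ext i j
    simp only [diagonal_mul, mul_diagonal, lowerFactorMatrix_mul_upperFactorMatrix_apply, A,
      of_apply]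
    exact_mod_cast choose_mul_choose_mul_choose m i j
  have hdiag (i : ℕ) : ((2 * m + 2 * i).choose (m + i) : ℚ) * (m + i).choose i
      = (2 * m + i).choose m * (2 * m + 2 * i).choose i := by
    have h := Nat.choose_mul (n := 2 * m + 2 * i) (k := m + i) (s := i) (by omega)
    rw [show 2 * m + 2 * i - i = 2 * m + i by omega, Nat.add_sub_cancel] at h
    rw [mul_comm ((2 * m + i).choose m : ℚ)]
    exact_mod_cast h
  have hdet := congrArg det hLU
  rw [det_mul, det_mul, det_mul, det_mul, det_diagonal, det_diagonal, det_diagonal,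
    det_lowerFactorMatrix, det_upperFactorMatrix, mul_one, ← prod_mul_distrib] at hdet
  simp only [hdiag, prod_mul_distrib] at hdet
  have hα : ∏ i : Fin n, ((2 * m + i).choose m : ℚ) ≠ 0 :=
    prod_ne_zero_iff.2 fun i _ => by exact_mod_cast (Nat.choose_pos (by omega)).ne'
  have hδ : ∏ j : Fin n, ((2 * (j : ℕ)).choose j : ℚ) ≠ 0 :=
    prod_ne_zero_iff.2 fun j _ => by exact_mod_cast (Nat.choose_pos (by omega)).ne'
  rw [prod_div_distrib, eq_div_iff hδ]
  exact mul_left_cancel₀ hα (by linear_combination hdet)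

theorem ite_choose_eq_choose_two_mul (m i j : ℕ) :
    (if j ≤ i + m then (i + j + m).choose (i + m - j) else 0) = (m + i + j).choose (2 * j) := by
  split_ifs with h
  · rw [show m + i + j = i + j + m by ring]
    exact Nat.choose_symm_of_eq_add (by omega)
  · exact (Nat.choose_eq_zero_of_lt (by omega)).symm

theorem binomial_det_product_general (m n : ℕ) :
    Matrix.det (Matrix.of fun i j : Fin n =>
        if (j : ℕ) ≤ (i : ℕ) + m then (((i : ℕ) + j + m).choose ((i : ℕ) + m - j) : ℚ)
        else 0) =
      ∏ j ∈ Finset.Icc 1 (n - 1), ∏ i ∈ Finset.Icc 1 j,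
        ((2 * m + i + j : ℚ) / (i + j : ℚ)) := by
  have hA : (of fun i j : Fin n =>
        if (j : ℕ) ≤ (i : ℕ) + m then (((i : ℕ) + j + m).choose ((i : ℕ) + m - j) : ℚ)
        else 0)
      = of fun i j : Fin n => ((m + i + j).choose (2 * j) : ℚ) := by
    ext i j
    simp only [of_apply]
    exact_mod_cast ite_choose_eq_choose_two_mul m i j
  rw [hA, det_choose_two_mul, Fin.prod_univ_eq_prod_range
    (fun j => ((2 * m + 2 * j).choose j : ℚ) / (2 * j).choose j)]
  simp_rw [cast_choose_div_choose_eq_prod]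
  refine (prod_subset (fun j hj => ?_) fun j hj hj' => ?_).symm
  · simp only [mem_Icc, mem_range] at hj ⊢; omega
  · obtain rfl : j = 0 := by simp only [mem_Icc, mem_range] at hj hj'; omega
    simp

theorem binomial_det_product (m n : ℕ) (hm : 1 ≤ m) (hn : 1 ≤ n) :
    Matrix.det (Matrix.of fun i j : Fin n =>
        if (j : ℕ) ≤ (i : ℕ) + m then (((i : ℕ) + j + m).choose ((i : ℕ) + m - j) : ℚ)
        else 0) =
      ∏ j ∈ Finset.Icc 1 (n - 1), ∏ i ∈ Finset.Icc 1 j,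
        ((2 * m + i + j : ℚ) / (i + j : ℚ)) :=
  binomial_det_product_general m n
end

section
/- Let μ be a sequence in a field with μ(0)=1 and all Hankel determinants nonzero, and let p_n be the associated monic orthogonal polynomials with coefficients p(n,j) (so p_n(x) = Σ_j (-1)^{n-j} p(n,j) x^j, with p(n,j)=0 for j > n). Then for each m ≥ 1, the n×n matrix (p(i+m,j))_{i,j=0}^{n-1} has nonzero determinant equal to det(μ(i+j+n))_{i,j=0}^{m-1} / det(μ(i+j))_{i,j=0}^{m-1}, provided the shifted Hankel determinant det(μ(i+j+n))_{i,j=0}^{m-1} is nonzero; in particular det(p(i+m,j))_{i,j=0}^{n-1} is independent of which representation is used and the matrix is invertible iff the shifted Hankel determinant is nonzero. -/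
/-
Let `N = n + m`, let `L` be the lower unitriangular `N × N` matrix of the coefficients of the
monic orthogonal polynomials `p_0, …, p_{N-1}` and `H` the `N × N` Hankel matrix of `μ`.
Expanding bordered Hankel determinants along their last row gives the orthogonality relations:
`L * H` is upper triangular with diagonal `H_{k+1} / H_k`. Replace the first `m` rows of `L` by
the unit rows `e_n, …, e_{N-1}`: the resulting matrix `A` has determinant `± det (p(i+m,j))`,
while `A * H` is block triangular with diagonal blocks the lower right `n × n` corner of `L * H`
(determinant `H_N / H_m`) and the shifted Hankel matrix `(μ(i+j+n))`. Comparing determinants and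
cancelling `H_N` gives the formula; the two signs `(-1)^(mn)`, from the signs of the coefficients
and from reordering the columns of `A * H`, cancel.
-/

/-- `Dm μ a b j` : determinant of the `(b-a)×(b-a)` Hankel-type matrix on
`μ a, …, μ b` with the column containing `μ j` (in the top row) deleted;
`0` if `j < a` or `j > b`. -/
noncomputable def Dm {F : Type*} [Field F] (μ : ℕ → F) (a b j : ℕ) : F :=
  if a ≤ j ∧ j ≤ b then
    Matrix.det (Matrix.of fun r c : Fin (b - a) =>
      μ (a + (r : ℕ) + (if (c : ℕ) < j - a then (c : ℕ) else (c : ℕ) + 1)))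
  else 0

open Matrix Finset Equiv

theorem coe_finRotate_pow {N : ℕ} (p : ℕ) (x : Fin N) :
    ((finRotate N ^ p) x : ℕ) = (x + p) % N := by
  obtain _ | N := N
  · exact x.elim0
  induction p with
  | zero => simp [Nat.mod_eq_of_lt x.isLt]
  | succ p ih =>
    rw [pow_succ', Perm.mul_apply, finRotate_apply, Fin.val_add, ih, Fin.val_one',
      Nat.add_mod_mod, Nat.mod_add_mod, add_assoc]

theorem sign_finAddFlip (m n : ℕ) :
    Perm.sign (finAddFlip.trans (finCongr (Nat.add_comm n m)) : Perm (Fin (m + n))) =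
      (-1) ^ (m * n) := by
  have hflip : (finAddFlip.trans (finCongr (Nat.add_comm n m)) : Perm (Fin (m + n))) =
      finRotate (m + n) ^ n := by
    ext ⟨x, hx⟩
    rw [coe_finRotate_pow]
    rcases lt_or_ge x m with h | h
    · simp [finAddFlip_apply_mk_left h, Nat.add_comm x n,
        Nat.mod_eq_of_lt (show n + x < m + n by omega)]
    · rw [show x + n = x - m + (m + n) by omega, Nat.add_mod_right,
        Nat.mod_eq_of_lt (show x - m < m + n by omega)]
      simp [finAddFlip_apply_mk_right h hx]
  rw [hflip, map_pow, sign_finRotate, ← pow_mul]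
  obtain _ | n := n
  · simp
  rw [show (m + (n + 1) - 1) * (n + 1) = m * (n + 1) + n * (n + 1) by
      rw [show m + (n + 1) - 1 = m + n by omega]; ring,
    pow_add, (Nat.even_mul_succ_self n).neg_one_pow, mul_one]

theorem Finset.prod_range_div_of_ne_zero {G₀ : Type*} [CommGroupWithZero G₀] (f : ℕ → G₀)
    (hf : ∀ k, f k ≠ 0) (m n : ℕ) :
    ∏ i ∈ range n, f (i + m + 1) / f (i + m) = f (n + m) / f m := by
  induction n with
  | zero => simp [div_self (hf m)]
  | succ n ih =>
    rw [prod_range_succ, ih, mul_comm, div_mul_div_cancel₀ (hf _), Nat.add_right_comm]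

namespace Matrix

variable {R : Type*} [CommRing R] {n m : ℕ}

theorem det_of_neg_one_pow_mul (a : ℕ) (M : Matrix (Fin n) (Fin n) R) :
    (of fun i j : Fin n => (-1) ^ ((i : ℕ) + a + j) * M i j).det = (-1) ^ (a * n) * M.det := by
  have hM : (of fun i j : Fin n => (-1) ^ ((i : ℕ) + a + j) * M i j) =
      of fun (i j : Fin n) => (-1) ^ ((i : ℕ) + a) *
        of (fun i j : Fin n => (-1) ^ (j : ℕ) * M i j) i j := by
    ext i j
    simp only [of_apply, pow_add]
    ring
  have hsign (i : ℕ) : (-1 : R) ^ (i + a) * (-1) ^ i = (-1) ^ a := by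
    rw [pow_add, mul_right_comm, ← pow_add, ← two_mul, pow_mul, neg_one_sq, one_pow, one_mul]
  rw [hM, det_mul_column, det_mul_row, ← mul_assoc, ← prod_mul_distrib]
  simp only [hsign, prod_const, card_univ, Fintype.card_fin, ← pow_mul]

/-- A form of Jacobi's complementary minor identity. -/
theorem det_submatrix_mul_det_of_mul_apply_eq_zero (L H : Matrix (Fin (n + m)) (Fin (n + m)) R)
    (hLH : ∀ (i : Fin n) (s : Fin m),
      (L * H) (i.addNat m) (s.castLE (Nat.le_add_left m n)) = 0) :
    (-1) ^ (n * m) * (L.submatrix (fun i : Fin n => i.addNat m) (Fin.castAdd m)).det * H.det =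
      ((L * H).submatrix (fun i : Fin n => i.addNat m) (fun i : Fin n => i.addNat m)).det *
        (H.submatrix (Fin.natAdd n) (Fin.castLE (Nat.le_add_left m n))).det := by
  let A : Matrix (Fin n ⊕ Fin m) (Fin (n + m)) R :=
    fromRows (L.submatrix (fun i : Fin n => i.addNat m) id)
      ((1 : Matrix _ _ R).submatrix (Fin.natAdd n) id)
  let σ : Perm (Fin (n + m)) := finAddFlip.trans (finCongr (Nat.add_comm m n))
  have hσ_inl (t : Fin n) : σ (Fin.castAdd m t) = t.addNat m := by
    ext; simp [σ, Nat.add_comm]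
  have hσ_inr (s : Fin m) : σ (Fin.natAdd n s) = s.castLE (Nat.le_add_left m n) := by
    ext; simp [σ]
  have hA : A.submatrix id finSumFinEquiv =
      fromBlocks (L.submatrix (fun i : Fin n => i.addNat m) (Fin.castAdd m))
        (L.submatrix (fun i : Fin n => i.addNat m) (Fin.natAdd n)) 0 1 := by
    ext (i | r) (j | r')
    · rfl
    · rfl
    · exact one_apply_ne (Fin.ne_of_gt (show (j : ℕ) < n + r by omega))
    · simp [A, one_apply]
  have hAH : (A * H).submatrix id (finSumFinEquiv.trans σ) =
      fromBlocks ((L * H).submatrix (fun i : Fin n => i.addNat m) (fun i : Fin n => i.addNat m))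
        0 (H.submatrix (Fin.natAdd n) (fun i : Fin n => i.addNat m))
        (H.submatrix (Fin.natAdd n) (Fin.castLE (Nat.le_add_left m n))) := by
    ext (i | r) (t | s)
    · simp [A, hσ_inl, mul_apply]
    · simpa [A, hσ_inr, mul_apply] using hLH i s
    · simp [A, hσ_inl, mul_apply, one_apply]
    · simp [A, hσ_inr, mul_apply, one_apply]
  have hH : (H.submatrix finSumFinEquiv (finSumFinEquiv.trans σ)).det =
      (-1) ^ (n * m) * H.det := by
    rw [show H.submatrix finSumFinEquiv (finSumFinEquiv.trans σ) =
        (H.submatrix id σ).submatrix finSumFinEquiv finSumFinEquiv from rfl,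
      det_submatrix_equiv_self, det_permute', sign_finAddFlip]
    push_cast
    rfl
  have hdet := congrArg det (submatrix_mul_equiv A H id finSumFinEquiv (finSumFinEquiv.trans σ))
  rw [det_mul, hA, hAH, hH, det_fromBlocks_zero₂₁, det_fromBlocks_zero₁₂, det_one,
    mul_one] at hdet
  linear_combination hdet

def hankel {α : Type*} (μ : ℕ → α) (k : ℕ) : Matrix (Fin k) (Fin k) α :=
  of fun i j => μ (i + j)

theorem hankel_submatrix_natAdd_castLE {α : Type*} (μ : ℕ → α) (n m : ℕ) :
    (hankel μ (n + m)).submatrix (Fin.natAdd n) (Fin.castLE (Nat.le_add_left m n)) =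
      of fun i j : Fin m => μ (i + j + n) := by
  ext i j
  simp only [hankel, submatrix_apply, of_apply, Fin.val_natAdd, Fin.val_castLE]
  ring_nf

end Matrix

section OrthogonalPolynomials

variable {F : Type*} [Field F] (μ : ℕ → F)

def borderedHankelDet (k s : ℕ) : F :=
  (updateRow (hankel μ (k + 1)) (Fin.last k) fun c => μ (s + c)).det

/-- The coefficient `(-1)^(k-j) p(k,j)` of `x ^ j` in the monic orthogonal polynomial `p_k`. -/
noncomputable def orthoPolyCoeff (k j : ℕ) : F :=
  (-1) ^ (k + j) * Dm μ 0 k j / Dm μ 0 k k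

noncomputable def orthoPolyCoeffMatrix (N : ℕ) : Matrix (Fin N) (Fin N) F :=
  of fun k j => orthoPolyCoeff μ k j

theorem Dm_zero_self (k : ℕ) : Dm μ 0 k k = (hankel μ k).det := by
  rw [Dm, if_pos ⟨k.zero_le, le_rfl⟩]
  congr 1
  ext r c
  simp [hankel]

theorem Dm_zero_of_lt {k j : ℕ} (h : k < j) : Dm μ 0 k j = 0 :=
  if_neg fun hj => (h.trans_le hj.2).false

theorem Dm_zero_eq_det_submatrix (k : ℕ) (j : Fin (k + 1)) :
    Dm μ 0 k j = ((hankel μ (k + 1)).submatrix Fin.castSucc j.succAbove).det := by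
  rw [Dm, if_pos ⟨j.val.zero_le, Nat.lt_succ_iff.mp j.isLt⟩]
  congr 1
  ext r c
  simp only [of_apply, submatrix_apply, hankel, Fin.succAbove, Fin.lt_def,
    Fin.val_castSucc, Nat.sub_zero, zero_add]
  split_ifs <;> simp

theorem borderedHankelDet_eq_sum (k s : ℕ) :
    borderedHankelDet μ k s =
      ∑ j : Fin (k + 1), (-1) ^ (k + j : ℕ) * Dm μ 0 k j * μ (j + s) := by
  rw [borderedHankelDet, det_succ_row _ (Fin.last k)]
  refine sum_congr rfl fun j _ => ?_
  rw [updateRow_self, submatrix_updateRow_succAbove, Fin.succAbove_last,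
    Dm_zero_eq_det_submatrix, Fin.val_last, Nat.add_comm s]
  ring

theorem borderedHankelDet_self (k : ℕ) :
    borderedHankelDet μ k k = (hankel μ (k + 1)).det := by
  rw [borderedHankelDet, ← Fin.val_last k]
  exact congrArg det (updateRow_eq_self _ _)

theorem borderedHankelDet_of_lt {k s : ℕ} (h : s < k) : borderedHankelDet μ k s = 0 := by
  have hrow : (fun c : Fin (k + 1) => μ (s + c)) = hankel μ (k + 1) ⟨s, by omega⟩ := rfl
  rw [borderedHankelDet, hrow]
  exact det_updateRow_eq_zero (Fin.ne_of_lt h)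

theorem sum_range_orthoPolyCoeff_mul {k T : ℕ} (h : k < T) (s : ℕ) :
    ∑ j ∈ range T, orthoPolyCoeff μ k j * μ (j + s) =
      borderedHankelDet μ k s / (hankel μ k).det := by
  have hterm (j : ℕ) : orthoPolyCoeff μ k j * μ (j + s) =
      (-1) ^ (k + j) * Dm μ 0 k j * μ (j + s) / Dm μ 0 k k := by
    rw [orthoPolyCoeff]; ring
  simp only [hterm, ← sum_div]
  rw [← sum_subset (range_subset_range.2 h) fun j _ hj => by
      rw [Dm_zero_of_lt μ (by simpa using hj)]; ring,
    ← Fin.sum_univ_eq_sum_range (fun j => (-1) ^ (k + j) * Dm μ 0 k j * μ (j + s)),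
    borderedHankelDet_eq_sum, Dm_zero_self]

theorem orthoPolyCoeffMatrix_mul_hankel_apply {N : ℕ} (k s : Fin N) :
    (orthoPolyCoeffMatrix μ N * hankel μ N) k s =
      borderedHankelDet μ k s / (hankel μ k).det := by
  rw [← sum_range_orthoPolyCoeff_mul μ k.isLt, mul_apply,
    ← Fin.sum_univ_eq_sum_range (fun j => orthoPolyCoeff μ k j * μ (j + s))]
  rfl

theorem orthoPolyCoeffMatrix_mul_hankel_apply_of_lt {N : ℕ} {k s : Fin N} (h : s < k) :
    (orthoPolyCoeffMatrix μ N * hankel μ N) k s = 0 := by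
  rw [orthoPolyCoeffMatrix_mul_hankel_apply, borderedHankelDet_of_lt μ h, zero_div]

theorem det_submatrix_addNat_orthoPolyCoeffMatrix_mul_hankel
    (hH : ∀ k, (hankel μ k).det ≠ 0) (n m : ℕ) :
    ((orthoPolyCoeffMatrix μ (n + m) * hankel μ (n + m)).submatrix
        (fun i : Fin n => i.addNat m) (fun i : Fin n => i.addNat m)).det =
      (hankel μ (n + m)).det / (hankel μ m).det := by
  rw [det_of_isUpperTriangular]
  · simp only [submatrix_apply, orthoPolyCoeffMatrix_mul_hankel_apply, Fin.val_addNat,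
      borderedHankelDet_self]
    rw [Fin.prod_univ_eq_prod_range
        (fun i => (hankel μ (i + m + 1)).det / (hankel μ (i + m)).det),
      prod_range_div_of_ne_zero _ hH]
  · intro i t (h : t < i)
    exact orthoPolyCoeffMatrix_mul_hankel_apply_of_lt μ (Nat.add_lt_add_right h m)

theorem det_orthoPolyCoeffMatrix_submatrix_addNat_castAdd (n m : ℕ) :
    ((orthoPolyCoeffMatrix μ (n + m)).submatrix (fun i : Fin n => i.addNat m)
        (Fin.castAdd m)).det =
      (-1) ^ (m * n) * (of fun i j : Fin n =>
        Dm μ 0 ((i : ℕ) + m) j / Dm μ 0 ((i : ℕ) + m) ((i : ℕ) + m)).det := by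
  rw [← det_of_neg_one_pow_mul]
  congr 1
  ext i j
  simp [orthoPolyCoeffMatrix, orthoPolyCoeff, mul_div_assoc]

end OrthogonalPolynomials

theorem orthogonal_coefficient_matrix_invertibility_general {F : Type*} [Field F]
    (μ : ℕ → F)
    (hH : ∀ k : ℕ, Matrix.det (Matrix.of fun i j : Fin k => μ (i + j)) ≠ 0)
    (m n : ℕ) :
    Matrix.det (Matrix.of fun i j : Fin n =>
        Dm μ 0 ((i : ℕ) + m) (j : ℕ) / Dm μ 0 ((i : ℕ) + m) ((i : ℕ) + m)) =
      Matrix.det (Matrix.of fun i j : Fin m => μ ((i : ℕ) + j + n)) /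
        Matrix.det (Matrix.of fun i j : Fin m => μ ((i : ℕ) + j)) ∧
    (Matrix.det (Matrix.of fun i j : Fin n =>
        Dm μ 0 ((i : ℕ) + m) (j : ℕ) / Dm μ 0 ((i : ℕ) + m) ((i : ℕ) + m)) ≠ 0 ↔
      Matrix.det (Matrix.of fun i j : Fin m => μ ((i : ℕ) + j + n)) ≠ 0) := by
  have hH' : ∀ k, (hankel μ k).det ≠ 0 := hH
  have hsign : (-1 : F) ^ (n * m) * (-1) ^ (m * n) = 1 := by
    rw [mul_comm n m, ← pow_add, ← two_mul, pow_mul, neg_one_sq, one_pow]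
  have key := det_submatrix_mul_det_of_mul_apply_eq_zero (orthoPolyCoeffMatrix μ (n + m))
    (hankel μ (n + m)) fun i s => orthoPolyCoeffMatrix_mul_hankel_apply_of_lt μ
      (Fin.lt_def.2 (show (s : ℕ) < i + m by omega))
  rw [det_orthoPolyCoeffMatrix_submatrix_addNat_castAdd, ← mul_assoc, hsign, one_mul,
    det_submatrix_addNat_orthoPolyCoeffMatrix_mul_hankel μ hH', hankel_submatrix_natAdd_castLE]
    at key
  suffices hP : (of fun i j : Fin n =>
      Dm μ 0 ((i : ℕ) + m) j / Dm μ 0 ((i : ℕ) + m) ((i : ℕ) + m)).det =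
        (of fun i j : Fin m => μ (i + j + n)).det / (hankel μ m).det from
    ⟨hP, by rw [hP, div_ne_zero_iff, and_iff_left (hH' m)]⟩
  apply mul_right_cancel₀ (hH' (n + m))
  rw [key]
  ring

theorem orthogonal_coefficient_matrix_invertibility {F : Type*} [Field F]
    (μ : ℕ → F) (hμ0 : μ 0 = 1)
    (hH : ∀ k : ℕ, Matrix.det (Matrix.of fun i j : Fin k => μ (i + j)) ≠ 0)
    (m n : ℕ) (hm : 1 ≤ m) (hn : 1 ≤ n) :
    Matrix.det (Matrix.of fun i j : Fin n =>
        Dm μ 0 ((i : ℕ) + m) (j : ℕ) / Dm μ 0 ((i : ℕ) + m) ((i : ℕ) + m)) =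
      Matrix.det (Matrix.of fun i j : Fin m => μ ((i : ℕ) + j + n)) /
        Matrix.det (Matrix.of fun i j : Fin m => μ ((i : ℕ) + j)) ∧
    (Matrix.det (Matrix.of fun i j : Fin n =>
        Dm μ 0 ((i : ℕ) + m) (j : ℕ) / Dm μ 0 ((i : ℕ) + m) ((i : ℕ) + m)) ≠ 0 ↔
      Matrix.det (Matrix.of fun i j : Fin m => μ ((i : ℕ) + j + n)) ≠ 0) :=
  orthogonal_coefficient_matrix_invertibility_general μ hH m n
end
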